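/- If a finite Wang tileset τ admits a tiling of the plane that is vertically periodic (with some period p > 0) , then τ admits a fully periodic tiling, i.e. a tiling g and an integer q > 0 with g(i,j) = g(i+q,j) = g(i,j+q) for all i,j. -/

import Mathlib

/-!
The columns `f i` of a vertically `p`-periodic tiling are determined by their `p` tiles, so
there are finitely many of them and two columns `a < b` coincide. Repeating the block of columns
`a, …, b - 1` horizontally gives a tiling again, now `(b - a)`-periodic horizontally and still
`p`-periodic vertically, hence periodic with period `(b - a) * p` in both directions.
-/

structure WangTile (C : Type) where
  e : C
  w : C
  n : C
  s : C
deriving DecidableEq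

def IsTiling {C : Type} (τ : Set (WangTile C)) (f : ℤ → ℤ → WangTile C) : Prop :=
  (∀ i j, f i j ∈ τ) ∧ (∀ i j, (f i j).e = (f (i+1) j).w) ∧
    (∀ i j, (f i j).n = (f i (j+1)).s)

open Function

section Periodic

variable {α : Type*}

theorem Function.Periodic.eq_of_eqOn_Ico {u v : ℤ → α} {p : ℤ} (hp : 0 < p)
    (hu : Periodic u p) (hv : Periodic v p) (h : Set.EqOn u v (Set.Ico 0 p)) : u = v := by
  funext j
  have hj : j % p ∈ Set.Ico 0 p := ⟨Int.emod_nonneg j hp.ne', Int.emod_lt_of_pos j hp⟩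
  rw [← hu.sub_int_mul_eq (j / p), ← hv.sub_int_mul_eq (j / p), Int.cast_id, mul_comm,
    ← Int.emod_def]
  exact h hj

/-- Pigeonhole on the finitely many possible restrictions to one period. -/
theorem exists_lt_eq_of_periodic {u : ℤ → ℤ → α} {s : Set α} (hs : s.Finite)
    (hmem : ∀ i j, u i j ∈ s) {p : ℤ} (hp : 0 < p) (hu : ∀ i, Periodic (u i) p) :
    ∃ a b, a < b ∧ u a = u b := by
  have := hs.to_subtype
  obtain ⟨a, b, hne, hab⟩ := Finite.exists_ne_map_eq_of_infinite
    fun i (k : Set.Ico 0 p) => (⟨u i k, hmem i k⟩ : s)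
  have hab : u a = u b := (hu a).eq_of_eqOn_Ico hp (hu b) fun k hk =>
    congrArg Subtype.val (congrFun hab ⟨k, hk⟩)
  rcases hne.lt_or_gt with h | h
  · exact ⟨a, b, h, hab⟩
  · exact ⟨b, a, h, hab.symm⟩

/-- `v` repeats the block `u a, …, u (a + d - 1)` forever; since `u a = u (a + d)`, every step
`v i → v (i + 1)` is a step `u k → u (k + 1)`. -/
theorem exists_periodic_of_eq {u : ℤ → α} {a d : ℤ} (hd : 0 < d) (h : u a = u (a + d)) :
    ∃ v : ℤ → α, Periodic v d ∧ ∀ i, ∃ k, v i = u k ∧ v (i + 1) = u (k + 1) := by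
  refine ⟨fun i => u (a + (i - a) % d), fun i => ?_, fun i => ⟨a + (i - a) % d, rfl, ?_⟩⟩
  · simp only [add_sub_right_comm, Int.add_emod_right]
  · have hr : 0 ≤ (i - a) % d := Int.emod_nonneg _ hd.ne'
    have hrd : (i - a) % d < d := Int.emod_lt_of_pos _ hd
    change u (a + (i + 1 - a) % d) = _
    rw [add_sub_right_comm, ← Int.emod_add_emod, add_assoc]
    rcases (Int.add_one_le_of_lt hrd).lt_or_eq with hlt | heq
    · rw [Int.emod_eq_of_lt (by omega) hlt]
    · rw [heq, Int.emod_self, add_zero, h]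

end Periodic

theorem IsTiling.of_columns {C : Type} {τ : Set (WangTile C)} {f g : ℤ → ℤ → WangTile C}
    (hf : IsTiling τ f) (hg : ∀ i, ∃ k, g i = f k ∧ g (i + 1) = f (k + 1)) : IsTiling τ g := by
  refine ⟨fun i j => ?_, fun i j => ?_, fun i j => ?_⟩ <;> obtain ⟨k, hk, hk'⟩ := hg i
  · rw [hk]; exact hf.1 k j
  · rw [hk, hk']; exact hf.2.1 k j
  · rw [hk]; exact hf.2.2 k j

theorem stmt5_general {C : Type} (τ : Finset (WangTile C))
    (h : ∃ (f : ℤ → ℤ → WangTile C) (p : ℤ), IsTiling (↑τ : Set (WangTile C)) f ∧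
      0 < p ∧ ∀ i j, f i (j + p) = f i j) :
    ∃ (g : ℤ → ℤ → WangTile C) (q : ℤ), IsTiling (↑τ : Set (WangTile C)) g ∧
      0 < q ∧ ∀ i j, g (i + q) j = g i j ∧ g i (j + q) = g i j := by
  obtain ⟨f, p, hf, hp, hfp⟩ := h
  obtain ⟨a, b, hab, hcol⟩ := exists_lt_eq_of_periodic τ.finite_toSet hf.1 hp fun i j => hfp i j
  obtain ⟨g, hgh, hcols⟩ :=
    exists_periodic_of_eq (u := f) (sub_pos.2 hab) (by rwa [add_sub_cancel])
  have hgv : ∀ i, Periodic (g i) p := fun i => by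
    obtain ⟨k, hk, -⟩ := hcols i
    exact hk ▸ hfp k
  refine ⟨g, (b - a) * p, hf.of_columns hcols, mul_pos (sub_pos.2 hab) hp, fun i j => ⟨?_, ?_⟩⟩
  · rw [mul_comm]; exact congrFun (hgh.int_mul p i) j
  · exact hgv i |>.int_mul (b - a) j

theorem stmt5 {C : Type} [Fintype C] (τ : Finset (WangTile C))
    (h : ∃ (f : ℤ → ℤ → WangTile C) (p : ℤ), IsTiling (↑τ : Set (WangTile C)) f ∧
      0 < p ∧ ∀ i j, f i (j + p) = f i j) :
    ∃ (g : ℤ → ℤ → WangTile C) (q : ℤ), IsTiling (↑τ : Set (WangTile C)) g ∧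
      0 < q ∧ ∀ i j, g (i + q) j = g i j ∧ g i (j + q) = g i j :=
  stmt5_general τ h
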